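/- Let s, t, p be nonzero real numbers with s < t < 0, and suppose p ≤ min(2t, (2/3)(s+t)), with the strict inequality p < 2t required in case s = 2t. Then for all positive real numbers a ≠ b, s/t < (M_s(a,b)^p − G(a,b)^p)/(M_t(a,b)^p − G(a,b)^p) < 2^{p/t − p/s}. -/

import Mathlib

/-- The power mean of order `r` of `a` and `b`. -/
noncomputable def powerMean (r a b : ℝ) : ℝ := ((a ^ r + b ^ r) / 2) ^ (1 / r)

/-- The geometric mean of `a` and `b`. -/
noncomputable def geomMean (a b : ℝ) : ℝ := Real.sqrt (a * b)

/-!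
Put `a = g eˣ`, `b = g e⁻ˣ` with `g = G(a, b)`; then `M_r(a, b) ^ p = g ^ p cosh (r x) ^ (p / r)`,
and with `k = s / t > 1`, `q = p / t` and `Y = |t x|` the quotient becomes
`(cosh (k Y) ^ (q / k) - 1) / (cosh Y ^ q - 1)`, where `q ≥ max 2 (2 (k + 1) / 3)`.
By Cauchy's mean value theorem it equals the quotient of the derivatives at some `c ∈ (0, Y)`.
The logarithm of that quotient tends to `log k` at `0` and to `(q - q / k) log 2` at `∞`, and it
is strictly increasing: its derivative is `q (tanh (k c) - tanh c) - 2 (φ c - φ (k c)) / c` with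
`φ x = x / sinh (2 x)`. Since `tanh` increases, it suffices to take `q = 2` when `k < 2` and
`q = 2 (k + 1) / 3` when `k > 2`. Both cases rest on the identity
`φ c - φ (2 c) = c (tanh (2 c) - tanh c)`, by which the derivative vanishes for `k = 2`, `q = 2`:
hence the strict inequality required when `s = 2 t`.
-/

open Real Set Filter Topology

lemma strictMonoOn_of_hasDerivAt_pos {D : Set ℝ} (hD : Convex ℝ D) {f f' : ℝ → ℝ}
    (hf : ∀ x ∈ D, HasDerivAt f (f' x) x) (hf' : ∀ x ∈ interior D, 0 < f' x) :
    StrictMonoOn f D :=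
  strictMonoOn_of_deriv_pos hD (fun x hx => (hf x hx).continuousAt.continuousWithinAt)
    fun x hx => (hf x (interior_subset hx)).deriv ▸ hf' x hx

lemma strictAntiOn_of_hasDerivAt_neg {D : Set ℝ} (hD : Convex ℝ D) {f f' : ℝ → ℝ}
    (hf : ∀ x ∈ D, HasDerivAt f (f' x) x) (hf' : ∀ x ∈ interior D, f' x < 0) :
    StrictAntiOn f D :=
  strictAntiOn_of_deriv_neg hD (fun x hx => (hf x hx).continuousAt.continuousWithinAt)
    fun x hx => (hf x (interior_subset hx)).deriv ▸ hf' x hx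

lemma StrictMonoOn.lt_of_tendsto_nhdsGT {f : ℝ → ℝ} {a l x : ℝ} (hf : StrictMonoOn f (Ioi a))
    (hl : Tendsto f (𝓝[>] a) (𝓝 l)) (hx : a < x) : l < f x := by
  obtain ⟨y, hay, hyx⟩ := exists_between hx
  have hly : l ≤ f y := le_of_tendsto hl <| by
    filter_upwards [Ioo_mem_nhdsGT hay] with z hz using (hf hz.1 hay hz.2).le
  exact hly.trans_lt (hf hay hx hyx)

lemma StrictMonoOn.lt_of_tendsto_atTop {f : ℝ → ℝ} {a l x : ℝ} (hf : StrictMonoOn f (Ioi a))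
    (hl : Tendsto f atTop (𝓝 l)) (hx : a < x) : f x < l := by
  have hx1 : a < x + 1 := by linarith
  have hl1 : f (x + 1) ≤ l := ge_of_tendsto hl <| by
    filter_upwards [eventually_ge_atTop (x + 1)] with z hz
    using hf.monotoneOn hx1 (hx1.trans_le hz) hz
  exact (hf hx hx1 (lt_add_one x)).trans_le hl1

lemma hasDerivAt_tanh (x : ℝ) : HasDerivAt tanh (1 / cosh x ^ 2) x := by
  have h := (hasDerivAt_sinh x).div (hasDerivAt_cosh x) (cosh_pos x).ne'
  rw [show (tanh : ℝ → ℝ) = sinh / cosh from funext fun y => tanh_eq_sinh_div_cosh y]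
  refine h.congr_deriv ?_
  rw [← cosh_sq_sub_sinh_sq x]
  ring

lemma tanh_strictMono : StrictMono tanh :=
  strictMonoOn_univ.mp <| strictMonoOn_of_hasDerivAt_pos convex_univ
    (fun x _ => hasDerivAt_tanh x) fun x _ => by positivity

namespace PowerMeanRatio

noncomputable def phi (x : ℝ) : ℝ := x / sinh (2 * x)

noncomputable def phiRate (x : ℝ) : ℝ := (x * cosh x - sinh x) / (cosh x - 1)

lemma hasDerivAt_phi {x : ℝ} (hx : x ≠ 0) :
    HasDerivAt phi (-phiRate (2 * x) / (2 * cosh x ^ 2)) x := by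
  have hs : sinh x ≠ 0 := sinh_ne_zero.2 hx
  have h2 : HasDerivAt (fun y => sinh (2 * y)) (cosh (2 * x) * 2) x :=
    (hasDerivAt_sinh (2 * x)).comp x (by simpa using (hasDerivAt_id' x).const_mul 2)
  refine ((hasDerivAt_id' x).div h2 (sinh_ne_zero.2 (mul_ne_zero two_ne_zero hx))).congr_deriv ?_
  rw [phiRate, sinh_two_mul, cosh_two_mul]
  have : cosh x ^ 2 + sinh x ^ 2 - 1 ≠ 0 := by
    rw [← cosh_sq_sub_sinh_sq x]; ring_nf; positivity
  field_simp
  grind [cosh_sq_sub_sinh_sq x]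

lemma hasDerivAt_phiRate {x : ℝ} (hx : x ≠ 0) :
    HasDerivAt phiRate (sinh x * (sinh x - x) / (cosh x - 1) ^ 2) x := by
  have hc : 1 < cosh x := one_lt_cosh.2 hx
  refine ((((hasDerivAt_id' x).mul (hasDerivAt_cosh x)).sub (hasDerivAt_sinh x)).div
    ((hasDerivAt_cosh x).sub_const 1) (by linarith)).congr_deriv ?_
  simp only [Pi.mul_apply, Pi.sub_apply]
  field_simp
  grind [cosh_sq_sub_sinh_sq x]

lemma phiRate_strictMonoOn : StrictMonoOn phiRate (Ioi 0) :=
  strictMonoOn_of_hasDerivAt_pos (convex_Ioi 0) (fun _ hx => hasDerivAt_phiRate (ne_of_gt hx))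
    fun x hx => by
      rw [interior_Ioi] at hx
      have hc : 1 < cosh x := one_lt_cosh.2 (ne_of_gt hx)
      have := self_lt_sinh_iff.2 hx
      exact div_pos (mul_pos (sinh_pos_iff.2 hx) (by linarith)) (by nlinarith)

lemma phi_sub_phi_two_mul {w : ℝ} (hw : w ≠ 0) :
    phi w - phi (2 * w) = w * (tanh (2 * w) - tanh w) := by
  have hs : sinh w ≠ 0 := sinh_ne_zero.2 hw
  have hc : 0 < cosh w := cosh_pos w
  unfold phi
  rw [tanh_eq_sinh_div_cosh, tanh_eq_sinh_div_cosh, sinh_two_mul (2 * w), cosh_two_mul,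
    sinh_two_mul]
  field_simp
  grind [cosh_sq_sub_sinh_sq w]

lemma three_mul_lt_two_mul_sinh_add_tanh {x : ℝ} (hx : 0 < x) : 3 * x < 2 * sinh x + tanh x := by
  have hd : ∀ y ∈ Ici (0 : ℝ), HasDerivAt (fun y => 2 * sinh y + tanh y - 3 * y)
      (2 * cosh y + 1 / cosh y ^ 2 - 3) y := fun y _ =>
    (((hasDerivAt_sinh y).const_mul 2).add (hasDerivAt_tanh y)).sub
      (by simpa using (hasDerivAt_id' y).const_mul 3)
  have hmono := strictMonoOn_of_hasDerivAt_pos (convex_Ici 0) hd fun y hy => by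
    rw [interior_Ici] at hy
    have hc : 1 < cosh y := one_lt_cosh.2 (ne_of_gt hy)
    have : 2 * cosh y + 1 / cosh y ^ 2 - 3
        = (cosh y - 1) ^ 2 * (2 * cosh y + 1) / cosh y ^ 2 := by
      field_simp; ring
    rw [this]
    have : 0 < cosh y - 1 := by linarith
    positivity
  have := hmono self_mem_Ici hx.le hx
  simp only [sinh_zero, tanh_zero, mul_zero, add_zero, sub_zero] at this
  linarith

lemma tanh_two_mul_sub_tanh (u : ℝ) :
    tanh (2 * u) - tanh u = (cosh (2 * u) - 1) / (sinh (2 * u) * cosh (2 * u)) := by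
  by_cases hu : u = 0
  · simp [hu]
  have hs : sinh u ≠ 0 := by simpa using hu
  rw [tanh_eq_sinh_div_cosh, tanh_eq_sinh_div_cosh, sinh_two_mul, cosh_two_mul]
  have : cosh u ^ 2 + sinh u ^ 2 ≠ 0 := by positivity
  field_simp
  grind [cosh_sq_sub_sinh_sq u]

lemma three_mul_phiRate_lt {u : ℝ} (hu : 0 < u) :
    3 * phiRate (4 * u) < 2 * (tanh (2 * u) - tanh u) * cosh (2 * u) ^ 2 + 6 * u := by
  have hS : 0 < sinh (2 * u) := sinh_pos_iff.2 (by linarith)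
  have hC : 0 < cosh (2 * u) := cosh_pos _
  have key := three_mul_lt_two_mul_sinh_add_tanh (x := 2 * u) (by linarith)
  have hid : 2 * (tanh (2 * u) - tanh u) * cosh (2 * u) ^ 2 + 6 * u - 3 * phiRate (4 * u)
      = cosh (2 * u) ^ 2 / sinh (2 * u) ^ 2 * (2 * sinh (2 * u) + tanh (2 * u) - 3 * (2 * u)) := by
    have : cosh (2 * u) ^ 2 + sinh (2 * u) ^ 2 - 1 ≠ 0 := by
      nlinarith [cosh_sq_sub_sinh_sq (2 * u)]
    rw [tanh_two_mul_sub_tanh, phiRate, show 4 * u = 2 * (2 * u) by ring, sinh_two_mul (2 * u),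
      cosh_two_mul (2 * u), tanh_eq_sinh_div_cosh]
    field_simp
    grind [cosh_sq_sub_sinh_sq (2 * u)]
  have : 0 < cosh (2 * u) ^ 2 / sinh (2 * u) ^ 2
      * (2 * sinh (2 * u) + tanh (2 * u) - 3 * (2 * u)) := mul_pos (by positivity) (by linarith)
  linarith

lemma phi_sub_lt_of_lt_two_mul {w z : ℝ} (hw : 0 < w) (hwz : w < z) (hz : z < 2 * w) :
    phi w - phi z < w * (tanh z - tanh w) := by
  set ρ : ℝ → ℝ := fun B => w * tanh B + phi B
  have hρ : ∀ B, 0 < B → HasDerivAt ρ ((2 * w - phiRate (2 * B)) / (2 * cosh B ^ 2)) B :=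
    fun B hB => (((hasDerivAt_tanh B).const_mul w).add (hasDerivAt_phi hB.ne')).congr_deriv <| by
      field_simp; ring
  have hrate : ∀ {B B'}, 0 < B → B < B' → phiRate (2 * B) < phiRate (2 * B') := fun hB hBB' =>
    phiRate_strictMonoOn (by simp; linarith) (by simp; linarith) (by linarith)
  suffices ρ w < ρ z by simp only [ρ] at this; linarith
  -- `ρ` increases while `phiRate (2 B) < 2 w` and decreases afterwards, and `ρ (2 w) = ρ w`.
  rcases le_or_gt (phiRate (2 * z)) (2 * w) with hle | hlt
  · refine strictMonoOn_of_hasDerivAt_pos (convex_Icc w z) (fun B hB => hρ B (hw.trans_le hB.1))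
      (fun B hB => ?_) (left_mem_Icc.2 hwz.le) (right_mem_Icc.2 hwz.le) hwz
    rw [interior_Icc] at hB
    have := hrate (hw.trans hB.1) hB.2
    exact div_pos (by linarith) (by positivity)
  · have h2w : ρ (2 * w) = ρ w := by
      simp only [ρ]; linarith [phi_sub_phi_two_mul hw.ne']
    rw [← h2w]
    refine strictAntiOn_of_hasDerivAt_neg (convex_Icc z (2 * w))
      (fun B hB => hρ B (hw.trans (hwz.trans_le hB.1))) (fun B hB => ?_)
      (left_mem_Icc.2 hz.le) (right_mem_Icc.2 hz.le) hz
    rw [interior_Icc] at hB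
    have := hrate (hw.trans hwz) hB.1
    exact div_neg_of_neg_of_pos (by linarith) (by positivity)

lemma three_mul_phiRate_two_mul_lt {w z : ℝ} (hw : 0 < w) (hz : 2 * w < z) :
    3 * phiRate (2 * z) < 2 * (tanh z - tanh w) * cosh z ^ 2 + 2 * (z + w) := by
  -- The right side decreases in `w` on `[w, z / 2]`; at `w = z / 2` it is `three_mul_phiRate_lt`.
  set h : ℝ → ℝ := fun v => 2 * (tanh z - tanh v) * cosh z ^ 2 + 2 * (z + v)
  have hanti : StrictAntiOn h (Icc w (z / 2)) := by
    refine strictAntiOn_of_hasDerivAt_neg (convex_Icc w (z / 2))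
      (f' := fun v => 2 * -(1 / cosh v ^ 2) * cosh z ^ 2 + 2) (fun v _ => ?_) (fun v hv => ?_)
    · exact ((((hasDerivAt_tanh v).const_sub (tanh z)).const_mul 2).mul_const _).add
        (by simpa using ((hasDerivAt_id' v).const_add z).const_mul 2)
    · rw [interior_Icc] at hv
      have hv0 : 0 < v := hw.trans hv.1
      have hcosh : cosh v < cosh z := cosh_lt_cosh.2 (by
        rw [abs_of_pos hv0, abs_of_pos (by linarith [hv.2])]; linarith [hv.2])
      have hcv := cosh_pos v
      have : cosh z ^ 2 / cosh v ^ 2 > 1 := by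
        rw [gt_iff_lt, one_lt_div (by positivity)]; nlinarith
      have : 2 * -(1 / cosh v ^ 2) * cosh z ^ 2 + 2 = 2 * (1 - cosh z ^ 2 / cosh v ^ 2) := by ring
      linarith
  have hhalf := three_mul_phiRate_lt (u := z / 2) (by linarith)
  rw [show 4 * (z / 2) = 2 * z by ring, show 2 * (z / 2) = z by ring] at hhalf
  have := hanti (left_mem_Icc.2 (by linarith)) (right_mem_Icc.2 (by linarith)) (by linarith)
  simp only [h] at this
  linarith

lemma phi_sub_lt_of_two_mul_lt {w z : ℝ} (hw : 0 < w) (hz : 2 * w < z) :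
    phi w - phi z < (z + w) / 3 * (tanh z - tanh w) := by
  set g : ℝ → ℝ := fun ζ => (ζ + w) / 3 * (tanh ζ - tanh w) + phi ζ - phi w
  have hg : ∀ ζ ∈ Icc (2 * w) z, HasDerivAt g
      ((2 * (tanh ζ - tanh w) * cosh ζ ^ 2 + 2 * (ζ + w) - 3 * phiRate (2 * ζ))
        / (6 * cosh ζ ^ 2)) ζ := fun ζ hζ =>
    (((((hasDerivAt_id' ζ).add_const w).div_const 3).mul ((hasDerivAt_tanh ζ).sub_const _)).add
      (hasDerivAt_phi (by linarith [hζ.1] : 0 < ζ).ne')).sub_const _ |>.congr_deriv <| by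
        field_simp; ring
  have hmono := strictMonoOn_of_hasDerivAt_pos (convex_Icc (2 * w) z) hg fun ζ hζ => by
    rw [interior_Icc] at hζ
    have := three_mul_phiRate_two_mul_lt hw hζ.1
    exact div_pos (by linarith) (by positivity)
  have := hmono (left_mem_Icc.2 hz.le) (right_mem_Icc.2 hz.le) hz
  have h2w := phi_sub_phi_two_mul hw.ne'
  simp only [g] at this
  linarith

lemma phi_sub_lt_mul_tanh_sub {k q w : ℝ} (hw : 0 < w) (hk : 1 < k) (hq2 : 2 ≤ q)
    (hq3 : 2 / 3 * (k + 1) ≤ q) (hk2 : k = 2 → 2 < q) :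
    phi w - phi (k * w) < q * w / 2 * (tanh (k * w) - tanh w) := by
  have hΔ : 0 < tanh (k * w) - tanh w := sub_pos.2 (tanh_strictMono (by nlinarith))
  rcases lt_trichotomy k 2 with hk' | rfl | hk'
  · calc phi w - phi (k * w) < w * (tanh (k * w) - tanh w) :=
          phi_sub_lt_of_lt_two_mul hw (by nlinarith) (by nlinarith)
      _ ≤ q * w / 2 * (tanh (k * w) - tanh w) := mul_le_mul_of_nonneg_right (by nlinarith) hΔ.le
  · calc phi w - phi (2 * w) = w * (tanh (2 * w) - tanh w) := phi_sub_phi_two_mul hw.ne'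
      _ < q * w / 2 * (tanh (2 * w) - tanh w) :=
          mul_lt_mul_of_pos_right (by nlinarith [hk2 rfl]) hΔ
  · calc phi w - phi (k * w) < (k * w + w) / 3 * (tanh (k * w) - tanh w) :=
          phi_sub_lt_of_two_mul_lt hw (by nlinarith)
      _ ≤ q * w / 2 * (tanh (k * w) - tanh w) := mul_le_mul_of_nonneg_right (by nlinarith) hΔ.le

/-- The logarithm of the quotient of the derivatives of `Y ↦ cosh (k * Y) ^ (q / k)` and
`Y ↦ cosh Y ^ q`. -/
noncomputable def logDerivRatio (k q Y : ℝ) : ℝ :=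
  (q / k - 1) * log (cosh (k * Y)) + log (sinh (k * Y)) - ((q - 1) * log (cosh Y) + log (sinh Y))

lemma hasDerivAt_logDerivRatio {k q Y : ℝ} (hk : 0 < k) (hY : 0 < Y) :
    HasDerivAt (logDerivRatio k q)
      (q * (tanh (k * Y) - tanh Y) - 2 * (phi Y - phi (k * Y)) / Y) Y := by
  have hsk : 0 < sinh (k * Y) := sinh_pos_iff.2 (by positivity)
  have hs : 0 < sinh Y := sinh_pos_iff.2 hY
  have hkY : HasDerivAt (fun Y => k * Y) k Y := by simpa using (hasDerivAt_id' Y).const_mul k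
  have h := (((((hasDerivAt_cosh _).comp Y hkY).log (cosh_pos _).ne').const_mul (q / k - 1)).add
    (((hasDerivAt_sinh _).comp Y hkY).log hsk.ne')).sub
    ((((hasDerivAt_cosh Y).log (cosh_pos _).ne').const_mul (q - 1)).add
      ((hasDerivAt_sinh Y).log hs.ne'))
  refine h.congr_deriv ?_
  have hck := cosh_pos (k * Y)
  have hc := cosh_pos Y
  simp only [phi, tanh_eq_sinh_div_cosh, sinh_two_mul]
  field_simp
  grind [cosh_sq_sub_sinh_sq Y, cosh_sq_sub_sinh_sq (k * Y)]

lemma logDerivRatio_strictMonoOn {k q : ℝ} (hk : 1 < k) (hq2 : 2 ≤ q)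
    (hq3 : 2 / 3 * (k + 1) ≤ q) (hk2 : k = 2 → 2 < q) :
    StrictMonoOn (logDerivRatio k q) (Ioi 0) :=
  strictMonoOn_of_hasDerivAt_pos (convex_Ioi 0)
    (fun _ hY => hasDerivAt_logDerivRatio (by linarith) hY) fun Y hY => by
      rw [interior_Ioi] at hY
      have := phi_sub_lt_mul_tanh_sub hY hk hq2 hq3 hk2
      rw [sub_pos, div_lt_iff₀ hY]
      nlinarith

lemma tendsto_log_exp_mul_sub_self (c : ℝ) :
    Tendsto (fun x => log (exp x * ((1 + c * exp (-(2 * x))) / 2)) - x) atTop (𝓝 (-log 2)) := by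
  have hexp : Tendsto (fun x : ℝ => exp (-(2 * x))) atTop (𝓝 0) :=
    tendsto_exp_neg_atTop_nhds_zero.comp (tendsto_id.const_mul_atTop two_pos)
  have h : Tendsto (fun x => (1 + c * exp (-(2 * x))) / 2) atTop (𝓝 (1 / 2)) := by
    simpa using ((hexp.const_mul c).const_add 1).div_const 2
  have hlog := ((continuousAt_log (by norm_num : (1 / 2 : ℝ) ≠ 0)).tendsto.comp h)
  rw [one_div, log_inv] at hlog
  refine hlog.congr' ?_
  filter_upwards [h.eventually (lt_mem_nhds (by norm_num : (0 : ℝ) < 1 / 2))] with x hx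
  rw [Function.comp_apply, log_mul (exp_pos x).ne' hx.ne', log_exp, add_sub_cancel_left]

lemma tendsto_log_cosh_sub_self_atTop :
    Tendsto (fun x => log (cosh x) - x) atTop (𝓝 (-log 2)) := by
  refine (tendsto_log_exp_mul_sub_self 1).congr fun x => ?_
  have : exp x * exp (-(2 * x)) = exp (-x) := by rw [← exp_add]; ring_nf
  rw [cosh_eq, ← this]
  congr 2
  ring

lemma tendsto_log_sinh_sub_self_atTop :
    Tendsto (fun x => log (sinh x) - x) atTop (𝓝 (-log 2)) := by
  refine (tendsto_log_exp_mul_sub_self (-1)).congr fun x => ?_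
  have : exp x * exp (-(2 * x)) = exp (-x) := by rw [← exp_add]; ring_nf
  rw [sinh_eq, ← this]
  congr 2
  ring

lemma tendsto_logDerivRatio_atTop {k : ℝ} (hk : 0 < k) (q : ℝ) :
    Tendsto (logDerivRatio k q) atTop (𝓝 ((q - q / k) * log 2)) := by
  have hkY : Tendsto (fun Y => k * Y) atTop atTop := tendsto_id.const_mul_atTop hk
  have h := (((tendsto_log_cosh_sub_self_atTop.comp hkY).const_mul (q / k - 1)).add
    (tendsto_log_sinh_sub_self_atTop.comp hkY)).sub
    ((tendsto_log_cosh_sub_self_atTop.const_mul (q - 1)).add tendsto_log_sinh_sub_self_atTop)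
  convert h using 1
  · ext Y
    simp only [logDerivRatio, Function.comp_apply]
    field_simp
    ring
  · congr 1; ring

lemma tendsto_sinh_mul_div_sinh {k : ℝ} :
    Tendsto (fun Y => sinh (k * Y) / sinh Y) (𝓝[>] 0) (𝓝 k) := by
  have hslope : ∀ c : ℝ, Tendsto (fun Y => sinh (c * Y) / Y) (𝓝[≠] 0) (𝓝 c) := fun c => by
    have h : HasDerivAt (fun Y => sinh (c * Y)) (cosh (c * 0) * c) 0 :=
      (hasDerivAt_sinh _).comp 0 (by simpa using (hasDerivAt_id' (0 : ℝ)).const_mul c)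
    simpa [div_eq_inv_mul] using (hasDerivAt_iff_tendsto_slope_zero.1 h)
  have h := ((hslope k).div (by simpa using hslope 1) one_ne_zero).mono_left
    (nhdsWithin_mono _ fun Y (hY : 0 < Y) => hY.ne')
  rw [div_one] at h
  refine h.congr' ?_
  filter_upwards [self_mem_nhdsWithin] with Y (hY : 0 < Y)
  simp only [Pi.div_apply]
  field_simp

lemma tendsto_logDerivRatio_nhdsGT_zero {k : ℝ} (hk : 0 < k) (q : ℝ) :
    Tendsto (logDerivRatio k q) (𝓝[>] 0) (𝓝 (log k)) := by
  have hcosh : ∀ c : ℝ, Tendsto (fun Y => log (cosh (c * Y))) (𝓝[>] 0) (𝓝 0) := fun c => by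
    have : Continuous fun Y => log (cosh (c * Y)) :=
      (continuous_cosh.comp (continuous_const.mul continuous_id)).log fun _ => (cosh_pos _).ne'
    simpa using (this.tendsto 0).mono_left nhdsWithin_le_nhds
  have h := (((hcosh k).const_mul (q / k - 1)).sub ((hcosh 1).const_mul (q - 1))).add
    ((continuousAt_log hk.ne').tendsto.comp tendsto_sinh_mul_div_sinh)
  rw [mul_zero, mul_zero, sub_zero, zero_add] at h
  refine h.congr' ?_
  filter_upwards [self_mem_nhdsWithin] with Y (hY : 0 < Y)
  rw [Function.comp_apply, log_div (sinh_pos_iff.2 (by positivity)).ne' (sinh_pos_iff.2 hY).ne',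
    logDerivRatio, one_mul]
  ring

lemma logDerivRatio_bounds {k q Y : ℝ} (hk : 1 < k) (hq2 : 2 ≤ q)
    (hq3 : 2 / 3 * (k + 1) ≤ q) (hk2 : k = 2 → 2 < q) (hY : 0 < Y) :
    log k < logDerivRatio k q Y ∧ logDerivRatio k q Y < (q - q / k) * log 2 :=
  have hmono := logDerivRatio_strictMonoOn hk hq2 hq3 hk2
  ⟨hmono.lt_of_tendsto_nhdsGT (tendsto_logDerivRatio_nhdsGT_zero (by linarith) q) hY,
    hmono.lt_of_tendsto_atTop (tendsto_logDerivRatio_atTop (by linarith) q) hY⟩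

lemma exp_logDerivRatio {k q Y : ℝ} (hk : 0 < k) (hY : 0 < Y) :
    exp (logDerivRatio k q Y)
      = cosh (k * Y) ^ (q / k - 1) * sinh (k * Y) / (cosh Y ^ (q - 1) * sinh Y) := by
  rw [logDerivRatio, exp_sub, exp_add, exp_add, exp_log (sinh_pos_iff.2 (by positivity)),
    exp_log (sinh_pos_iff.2 hY), rpow_def_of_pos (cosh_pos _), rpow_def_of_pos (cosh_pos _),
    mul_comm (q / k - 1), mul_comm (q - 1)]

lemma exists_coshPow_ratio_eq_exp {k q Y : ℝ} (hk : 0 < k) (hq : 0 < q) (hY : 0 < Y) :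
    ∃ c ∈ Ioo 0 Y, (cosh (k * Y) ^ (q / k) - 1) / (cosh Y ^ q - 1)
      = exp (logDerivRatio k q c) := by
  have hN : ∀ c, HasDerivAt (fun Y => cosh (k * Y) ^ (q / k) - 1)
      (q * (cosh (k * c) ^ (q / k - 1) * sinh (k * c))) c := fun c => by
    have hkc : HasDerivAt (fun Y => k * Y) k c := by simpa using (hasDerivAt_id' c).const_mul k
    refine ((((hasDerivAt_cosh _).comp c hkc).rpow_const (Or.inl (cosh_pos _).ne')).sub_const
      1).congr_deriv ?_
    simp only [Function.comp_apply]
    field_simp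
  have hD : ∀ c, HasDerivAt (fun Y => cosh Y ^ q - 1) (q * (cosh c ^ (q - 1) * sinh c)) c :=
    fun c => (((hasDerivAt_cosh c).rpow_const (Or.inl (cosh_pos _).ne')).sub_const 1).congr_deriv
      (by ring)
  obtain ⟨c, hc, hmvt⟩ := exists_ratio_hasDerivAt_eq_ratio_slope _ _ hY
    (fun c _ => (hN c).continuousAt.continuousWithinAt) (fun c _ => hN c)
    _ _ (fun c _ => (hD c).continuousAt.continuousWithinAt) (fun c _ => hD c)
  refine ⟨c, hc, ?_⟩
  have hDY : 0 < cosh Y ^ q - 1 := sub_pos.2 (one_lt_rpow (one_lt_cosh.2 hY.ne') hq)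
  have hDc : 0 < cosh c ^ (q - 1) * sinh c := mul_pos (rpow_pos_of_pos (cosh_pos c) _)
    (sinh_pos_iff.2 hc.1)
  simp only [mul_zero, cosh_zero, one_rpow, sub_self, sub_zero] at hmvt
  rw [exp_logDerivRatio hk hc.1, div_eq_div_iff hDY.ne' hDc.ne']
  apply mul_left_cancel₀ hq.ne'
  linear_combination -hmvt

theorem coshPow_ratio_bounds {k q Y : ℝ} (hk : 1 < k) (hq2 : 2 ≤ q)
    (hq3 : 2 / 3 * (k + 1) ≤ q) (hk2 : k = 2 → 2 < q) (hY : 0 < Y) :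
    k < (cosh (k * Y) ^ (q / k) - 1) / (cosh Y ^ q - 1) ∧
      (cosh (k * Y) ^ (q / k) - 1) / (cosh Y ^ q - 1) < 2 ^ (q - q / k) := by
  obtain ⟨c, hc, heq⟩ :=
    exists_coshPow_ratio_eq_exp (k := k) (q := q) (by linarith) (by linarith) hY
  obtain ⟨hlo, hhi⟩ := logDerivRatio_bounds hk hq2 hq3 hk2 hc.1
  rw [heq, rpow_def_of_pos two_pos, mul_comm (log 2)]
  exact ⟨(exp_log (by linarith : 0 < k)).symm.trans_lt (exp_lt_exp.2 hlo), exp_lt_exp.2 hhi⟩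

lemma powerMean_rpow_eq {a b : ℝ} (ha : 0 < a) (hb : 0 < b) {r : ℝ} (hr : r ≠ 0) (p : ℝ) :
    powerMean r a b ^ p = geomMean a b ^ p * cosh (r * ((log a - log b) / 2)) ^ (p / r) := by
  have hG : geomMean a b = exp ((log a + log b) / 2) := by
    rw [geomMean, sqrt_eq_iff_mul_self_eq_of_pos (exp_pos _), ← exp_add, add_halves,
      exp_add, exp_log ha, exp_log hb]
  have hsum : (a ^ r + b ^ r) / 2
      = exp ((log a + log b) / 2) ^ r * cosh (r * ((log a - log b) / 2)) := by
    rw [rpow_def_of_pos ha, rpow_def_of_pos hb, ← exp_mul, cosh_eq, mul_div_assoc', mul_add,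
      ← exp_add, ← exp_add]
    congr 2 <;> congr 1 <;> ring
  rw [powerMean, hsum, hG, mul_rpow (by positivity) (cosh_pos _).le, ← rpow_mul (exp_pos _).le,
    mul_one_div_cancel hr, rpow_one, mul_rpow (exp_pos _).le (by positivity),
    ← rpow_mul (cosh_pos _).le, one_div_mul_eq_div]

lemma coshPow_ratio_bounds_of_neg {s t p x : ℝ} (hst : s < t) (ht0 : t < 0)
    (hple : p ≤ min (2 * t) (2 / 3 * (s + t))) (hexc : s = 2 * t → p < 2 * t) (hx : x ≠ 0) :
    s / t < (cosh (s * x) ^ (p / s) - 1) / (cosh (t * x) ^ (p / t) - 1) ∧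
      (cosh (s * x) ^ (p / s) - 1) / (cosh (t * x) ^ (p / t) - 1) < 2 ^ (p / t - p / s) := by
  have ht : t ≠ 0 := ht0.ne
  have hk : 1 < s / t := (one_lt_div_of_neg ht0).2 hst
  have hq2 : 2 ≤ p / t := (le_div_iff_of_neg ht0).2 (min_le_left _ _ |>.trans' hple)
  have hq3 : 2 / 3 * (s / t + 1) ≤ p / t := by
    rw [le_div_iff_of_neg ht0]
    convert hple.trans (min_le_right _ _) using 1
    field_simp
  have hk2 : s / t = 2 → 2 < p / t := fun h =>
    (lt_div_iff_of_neg ht0).2 (hexc ((div_eq_iff ht).1 h))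
  have hscale : s / t * |t * x| = |s * x| := by
    rw [← abs_of_pos (by linarith : 0 < s / t), ← abs_mul, ← mul_assoc, div_mul_cancel₀ _ ht]
  have := coshPow_ratio_bounds hk hq2 hq3 hk2 (abs_pos.2 (mul_ne_zero ht hx))
  rwa [hscale, cosh_abs, cosh_abs, div_div_div_cancel_right₀ ht] at this

end PowerMeanRatio

open PowerMeanRatio in
theorem ratio_bounds_neg_small_p_general (s t p : ℝ)
    (hst : s < t) (ht0 : t < 0)
    (hple : p ≤ min (2 * t) (2 / 3 * (s + t)))
    (hexc : s = 2 * t → p < 2 * t) :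
    ∀ a b : ℝ, 0 < a → 0 < b → a ≠ b →
      s / t <
        (powerMean s a b ^ p - geomMean a b ^ p) /
          (powerMean t a b ^ p - geomMean a b ^ p) ∧
      (powerMean s a b ^ p - geomMean a b ^ p) /
          (powerMean t a b ^ p - geomMean a b ^ p) <
        (2 : ℝ) ^ (p / t - p / s) := by
  intro a b ha hb hab
  have hx : (log a - log b) / 2 ≠ 0 :=
    div_ne_zero (sub_ne_zero.2 fun h => hab (log_injOn_pos ha hb h)) two_ne_zero
  have hG : geomMean a b ^ p ≠ 0 := (rpow_pos_of_pos (sqrt_pos.2 (mul_pos ha hb)) p).ne'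
  rw [powerMean_rpow_eq ha hb (hst.trans ht0).ne, powerMean_rpow_eq ha hb ht0.ne, ← mul_sub_one,
    ← mul_sub_one, mul_div_mul_left _ _ hG]
  exact coshPow_ratio_bounds_of_neg hst ht0 hple hexc hx

/-- Theorem 3.1(b), second part. -/
theorem ratio_bounds_neg_small_p (s t p : ℝ) (hs : s ≠ 0) (ht : t ≠ 0) (hp : p ≠ 0)
    (hst : s < t) (ht0 : t < 0)
    (hple : p ≤ min (2 * t) (2 / 3 * (s + t)))
    (hexc : s = 2 * t → p < 2 * t) :
    ∀ a b : ℝ, 0 < a → 0 < b → a ≠ b →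
      s / t <
        (powerMean s a b ^ p - geomMean a b ^ p) /
          (powerMean t a b ^ p - geomMean a b ^ p) ∧
      (powerMean s a b ^ p - geomMean a b ^ p) /
          (powerMean t a b ^ p - geomMean a b ^ p) <
        (2 : ℝ) ^ (p / t - p / s) :=
  ratio_bounds_neg_small_p_general s t p hst ht0 hple hexc
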